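/- The automorphism group of the Andrásfai graph And(k) is isomorphic to the dihedral group D_{2n} of order 2n, where n = 3k−1. -/
import Mathlib


/-- The connection set of the Andrásfai graph: residues ≡ 1 (mod 3) in Z_{3k-1}. -/
def andrasfaiSet (k : ℕ) : Set (ZMod (3 * k - 1)) :=
  {x | ∃ t < k, x = ((3 * t + 1 : ℕ) : ZMod (3 * k - 1))}

/-- The Andrásfai graph And(k) = Cay(Z_{3k-1}; C). -/
def andrasfai (k : ℕ) : SimpleGraph (ZMod (3 * k - 1)) :=
  SimpleGraph.fromRel (fun g h => h - g ∈ andrasfaiSet k)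

namespace AndrasfaiAux

variable {k : ℕ}

lemma not_zero_mem (hk : 2 ≤ k) : (0 : ZMod (3 * k - 1)) ∉ andrasfaiSet k := by
  rintro ⟨t, ht, h⟩
  have h0 : ((3 * t + 1 : ℕ) : ZMod (3 * k - 1)) = 0 := h.symm
  rw [ZMod.natCast_eq_zero_iff] at h0
  have := Nat.le_of_dvd (by omega) h0
  omega

lemma neg_mem (hk : 2 ≤ k) {x : ZMod (3 * k - 1)} (hx : x ∈ andrasfaiSet k) :
    -x ∈ andrasfaiSet k := by
  obtain ⟨t, ht, rfl⟩ := hx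
  refine ⟨k - 1 - t, by omega, ?_⟩
  rw [neg_eq_iff_add_eq_zero, ← Nat.cast_add]
  have : (3 * t + 1) + (3 * (k - 1 - t) + 1) = 3 * k - 1 := by omega
  rw [this, ZMod.natCast_self]

lemma neg_mem_iff (hk : 2 ≤ k) {x : ZMod (3 * k - 1)} :
    -x ∈ andrasfaiSet k ↔ x ∈ andrasfaiSet k :=
  ⟨fun h => by simpa using neg_mem hk h, neg_mem hk⟩

lemma adj_iff (hk : 2 ≤ k) {x y : ZMod (3 * k - 1)} :
    (andrasfai k).Adj x y ↔ y - x ∈ andrasfaiSet k := by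
  rw [andrasfai, SimpleGraph.fromRel_adj]
  constructor
  · rintro ⟨hne, h | h⟩
    · exact h
    · rw [← neg_mem_iff hk, neg_sub] at h; exact h
  · intro h
    refine ⟨fun he => not_zero_mem hk ?_, Or.inl h⟩
    rw [he, sub_self] at h; exact h

/-- Key integer lemma: small multiples of 3 don't vanish mod 3k-1. -/
lemma int_eq_zero (hk : 2 ≤ k) {v : ℤ} (hv : v.natAbs < 2 * (3 * k - 1))
    (h3 : (3 : ℤ) ∣ v) (h : (v : ZMod (3 * k - 1)) = 0) : v = 0 := by
  rw [ZMod.intCast_zmod_eq_zero_iff_dvd] at h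
  obtain ⟨c, rfl⟩ := h
  have habs : (3 * k - 1) * c.natAbs < 2 * (3 * k - 1) := by
    rwa [Int.natAbs_mul, Int.natAbs_natCast] at hv
  have h1 : c.natAbs < 2 := by
    by_contra hge
    push_neg at hge
    have : 2 * (3 * k - 1) ≤ (3 * k - 1) * c.natAbs := by
      calc 2 * (3 * k - 1) = (3 * k - 1) * 2 := by ring
        _ ≤ (3 * k - 1) * c.natAbs := Nat.mul_le_mul_left _ hge
    omega
  have hc : c = 0 ∨ c = 1 ∨ c = -1 := by omega
  rcases hc with rfl | rfl | rfl
  · simp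
  · exfalso
    rw [mul_one] at h3
    have : (3 : ℕ) ∣ 3 * k - 1 := by exact_mod_cast h3
    omega
  · exfalso
    rw [mul_neg_one, dvd_neg] at h3
    have : (3 : ℕ) ∣ 3 * k - 1 := by exact_mod_cast h3
    omega

lemma key_eq (hk : 2 ≤ k) {t s : ℕ} (ht : t < k) (hs : s < k) {m : ℤ}
    (hm : m.natAbs ≤ k - 1)
    (h : ((3 * (t : ℤ) - 3 * s : ℤ) : ZMod (3 * k - 1)) = ((3 * m : ℤ) : ZMod (3 * k - 1))) :
    (t : ℤ) - s = m := by
  have h0 : ((3 * (t : ℤ) - 3 * s - 3 * m : ℤ) : ZMod (3 * k - 1)) = 0 := by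
    push_cast
    push_cast at h
    linear_combination h
  have := int_eq_zero hk (v := 3 * (t : ℤ) - 3 * s - 3 * m) (by omega)
    ⟨(t : ℤ) - s - m, by ring⟩ h0
  omega

/-- The set of common neighbours of `x` and `y`. -/
def S (k : ℕ) (x y : ZMod (3 * k - 1)) : Set (ZMod (3 * k - 1)) :=
  {z | (andrasfai k).Adj x z ∧ (andrasfai k).Adj y z}

lemma ncard_S_of (hk : 2 ≤ k) (x y : ZMod (3 * k - 1)) {m : ℤ} (hm : m.natAbs ≤ k - 1)
    (hd : y - x = ((3 * m : ℤ) : ZMod (3 * k - 1))) :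
    (S k x y).ncard = k - m.natAbs := by
  classical
  haveI : NeZero (3 * k - 1) := ⟨by omega⟩
  have himg : S k x y =
      (fun t : ℕ => x + ((3 * t + 1 : ℕ) : ZMod (3 * k - 1))) ''
        {t : ℕ | t < k ∧ ∃ s < k, (t : ℤ) - s = m} := by
    ext z
    constructor
    · rintro ⟨h1, h2⟩
      rw [adj_iff hk] at h1 h2
      obtain ⟨t, ht, hgt⟩ := h1
      obtain ⟨s, hs, hgs⟩ := h2
      refine ⟨t, ⟨ht, s, hs, ?_⟩, ?_⟩
      · apply key_eq hk ht hs hm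
        have e1 : ((3 * t + 1 : ℕ) : ZMod (3 * k - 1)) = z - x := hgt.symm
        have e2 : ((3 * s + 1 : ℕ) : ZMod (3 * k - 1)) = z - y := hgs.symm
        have hyx : ((3 * (t : ℤ) - 3 * s : ℤ) : ZMod (3 * k - 1)) = y - x := by
          push_cast
          push_cast at e1 e2
          linear_combination e1 - e2
        rw [hyx, hd]
      · show x + ((3 * t + 1 : ℕ) : ZMod (3 * k - 1)) = z
        rw [← hgt]; ring
    · rintro ⟨t, ⟨ht, s, hs, hts⟩, rfl⟩
      constructor
      · rw [adj_iff hk]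
        exact ⟨t, ht, by ring⟩
      · rw [adj_iff hk]
        refine ⟨s, hs, ?_⟩
        have e1 : x + ((3 * t + 1 : ℕ) : ZMod (3 * k - 1)) - y
            = ((3 * t + 1 : ℕ) : ZMod (3 * k - 1)) - ((3 * m : ℤ) : ZMod (3 * k - 1)) := by
          rw [← hd]; ring
        rw [e1]
        have hcast : ((t : ℤ) : ZMod (3 * k - 1)) - ((s : ℤ) : ZMod (3 * k - 1))
            = ((m : ℤ) : ZMod (3 * k - 1)) := by
          have := congrArg (fun z : ℤ => (z : ZMod (3 * k - 1))) hts
          push_cast at this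
          push_cast
          linear_combination this
        push_cast
        push_cast at hcast
        linear_combination 3 * hcast
  rw [himg, Set.ncard_image_of_injOn]
  · rcases le_or_gt 0 m with hm0 | hm0
    · have hset : {t : ℕ | t < k ∧ ∃ s < k, (t : ℤ) - s = m}
          = ↑(Finset.Ico m.toNat k) := by
        ext t
        simp only [Set.mem_setOf_eq, Finset.coe_Ico, Set.mem_Ico]
        constructor
        · rintro ⟨ht, s, hs, hts⟩; omega
        · rintro ⟨h1, h2⟩
          exact ⟨h2, t - m.toNat, by omega, by omega⟩
      rw [hset, Set.ncard_coe_finset, Nat.card_Ico]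
      omega
    · have hset : {t : ℕ | t < k ∧ ∃ s < k, (t : ℤ) - s = m}
          = ↑(Finset.range (k - m.natAbs)) := by
        ext t
        simp only [Set.mem_setOf_eq, Finset.coe_range, Set.mem_Iio]
        constructor
        · rintro ⟨ht, s, hs, hts⟩; omega
        · intro h1
          exact ⟨by omega, t + m.natAbs, by omega, by omega⟩
      rw [hset, Set.ncard_coe_finset, Finset.card_range]
  · intro a ha b hb hab
    obtain ⟨ha1, -⟩ := ha
    obtain ⟨hb1, -⟩ := hb
    have hab' : x + ((3 * a + 1 : ℕ) : ZMod (3 * k - 1))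
        = x + ((3 * b + 1 : ℕ) : ZMod (3 * k - 1)) := hab
    have h' : ((3 * a + 1 : ℕ) : ZMod (3 * k - 1)) = ((3 * b + 1 : ℕ) : ZMod (3 * k - 1)) :=
      add_left_cancel hab'
    have hv := congrArg ZMod.val h'
    rw [ZMod.val_cast_of_lt (by omega), ZMod.val_cast_of_lt (by omega)] at hv
    omega

lemma ncard_S_zero (hk : 2 ≤ k) (x y : ZMod (3 * k - 1))
    (h : ∀ m : ℤ, m.natAbs ≤ k - 1 → y - x ≠ ((3 * m : ℤ) : ZMod (3 * k - 1))) :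
    (S k x y).ncard = 0 := by
  have : S k x y = ∅ := by
    ext z
    simp only [Set.mem_empty_iff_false, iff_false]
    rintro ⟨h1, h2⟩
    rw [adj_iff hk] at h1 h2
    obtain ⟨t, ht, hgt⟩ := h1
    obtain ⟨s, hs, hgs⟩ := h2
    refine h ((t : ℤ) - s) (by omega) ?_
    have e1 : ((3 * t + 1 : ℕ) : ZMod (3 * k - 1)) = z - x := hgt.symm
    have e2 : ((3 * s + 1 : ℕ) : ZMod (3 * k - 1)) = z - y := hgs.symm
    push_cast
    push_cast at e1 e2
    linear_combination e2 - e1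
  rw [this, Set.ncard_empty]

lemma ncard_S_eq_iff (hk : 2 ≤ k) (x y : ZMod (3 * k - 1)) :
    (S k x y).ncard = k - 1 ↔ (y - x = 3 ∨ x - y = 3) := by
  constructor
  · intro h
    by_cases hex : ∃ m : ℤ, m.natAbs ≤ k - 1 ∧ y - x = ((3 * m : ℤ) : ZMod (3 * k - 1))
    · obtain ⟨m, hm, hd⟩ := hex
      rw [ncard_S_of hk x y hm hd] at h
      have hm1 : m = 1 ∨ m = -1 := by omega
      rcases hm1 with rfl | rfl
      · left
        rw [hd]; push_cast; norm_num
      · right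
        push_cast at hd
        linear_combination -hd
    · push_neg at hex
      rw [ncard_S_zero hk x y hex] at h
      omega
  · rintro (h | h)
    · have := ncard_S_of hk x y (m := 1) (by omega)
        (by rw [h]; push_cast; norm_num)
      rw [this]; simp
    · have := ncard_S_of hk x y (m := -1) (by omega)
        (by rw [← neg_sub x y, h]; push_cast; ring)
      rw [this]; simp

lemma ncard_S_iso (σ : andrasfai k ≃g andrasfai k) (x y : ZMod (3 * k - 1)) :
    (S k (σ x) (σ y)).ncard = (S k x y).ncard := by
  have himg : ⇑σ '' (S k x y) = S k (σ x) (σ y) := by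
    ext w
    constructor
    · rintro ⟨z, ⟨h1, h2⟩, rfl⟩
      exact ⟨σ.map_rel_iff.mpr h1, σ.map_rel_iff.mpr h2⟩
    · rintro ⟨h1, h2⟩
      refine ⟨σ.symm w, ⟨?_, ?_⟩, σ.apply_symm_apply w⟩
      · have hw := σ.apply_symm_apply w
        rw [← hw] at h1
        exact σ.map_rel_iff.mp h1
      · have hw := σ.apply_symm_apply w
        rw [← hw] at h2
        exact σ.map_rel_iff.mp h2
  rw [← himg, Set.ncard_image_of_injective _ σ.injective]

lemma rel_pres (hk : 2 ≤ k) (σ : andrasfai k ≃g andrasfai k) (x y : ZMod (3 * k - 1))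
    (h : y - x = 3 ∨ x - y = 3) : σ y - σ x = 3 ∨ σ x - σ y = 3 := by
  rw [← ncard_S_eq_iff hk, ncard_S_iso σ, ncard_S_eq_iff hk]
  exact h

lemma two_ne (hk : 2 ≤ k) : (2 : ZMod (3 * k - 1)) ≠ 0 := by
  intro h
  have h2 : ((2 : ℕ) : ZMod (3 * k - 1)) = 0 := by exact_mod_cast h
  rw [ZMod.natCast_eq_zero_iff] at h2
  have := Nat.le_of_dvd (by omega) h2
  omega

lemma six_ne (hk : 2 ≤ k) : (6 : ZMod (3 * k - 1)) ≠ 0 := by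
  intro h
  have h6 : ((6 : ℕ) : ZMod (3 * k - 1)) = 0 := by exact_mod_cast h
  rw [ZMod.natCast_eq_zero_iff] at h6
  have h1 := Nat.le_of_dvd (by omega) h6
  have h2 : 3 * k - 1 = 5 := by omega
  rw [h2] at h6
  norm_num at h6

lemma exists_three_mul (hk : 2 ≤ k) (x : ZMod (3 * k - 1)) :
    ∃ t : ℕ, x = ((3 * t : ℕ) : ZMod (3 * k - 1)) := by
  have hcop : Nat.Coprime 3 (3 * k - 1) := by
    rw [Nat.Prime.coprime_iff_not_dvd (by norm_num)]
    omega
  have hu : IsUnit ((3 : ℕ) : ZMod (3 * k - 1)) :=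
    (ZMod.isUnit_iff_coprime 3 (3 * k - 1)).mpr hcop
  obtain ⟨u, hu⟩ := hu
  haveI : NeZero (3 * k - 1) := ⟨by omega⟩
  refine ⟨((u⁻¹ : (ZMod (3 * k - 1))ˣ) * x : ZMod (3 * k - 1)).val, ?_⟩
  push_cast
  rw [ZMod.natCast_val, ZMod.cast_id]
  calc x = ((u * u⁻¹ : (ZMod (3 * k - 1))ˣ) : ZMod (3 * k - 1)) * x := by
        rw [mul_inv_cancel]; simp
    _ = ((3 : ℕ) : ZMod (3 * k - 1)) * ((u⁻¹ : (ZMod (3 * k - 1))ˣ) * x) := by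
        rw [Units.val_mul, hu]; ring
    _ = 3 * ((u⁻¹ : (ZMod (3 * k - 1))ˣ) * x) := by norm_num

lemma psi_id (hk : 2 ≤ k) (ψ : ZMod (3 * k - 1) → ZMod (3 * k - 1))
    (hinj : Function.Injective ψ)
    (hR : ∀ x y, y - x = 3 → (ψ y - ψ x = 3 ∨ ψ x - ψ y = 3))
    (h0 : ψ 0 = 0) (h3 : ψ 3 = 3) : ∀ x, ψ x = x := by
  have key : ∀ t : ℕ, ψ ((3 * t : ℕ) : ZMod (3 * k - 1)) = ((3 * t : ℕ) : ZMod (3 * k - 1)) ∧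
      ψ ((3 * (t + 1) : ℕ) : ZMod (3 * k - 1)) = ((3 * (t + 1) : ℕ) : ZMod (3 * k - 1)) := by
    intro t
    induction t with
    | zero =>
      constructor
      · simpa using h0
      · have h31 : ((3 * (0 + 1) : ℕ) : ZMod (3 * k - 1)) = 3 := by norm_num
        rw [h31]; exact h3
    | succ t ih =>
      refine ⟨ih.2, ?_⟩
      have hd : ((3 * (t + 1 + 1) : ℕ) : ZMod (3 * k - 1)) - ((3 * (t + 1) : ℕ)) = 3 := by
        push_cast; ring
      rcases hR _ _ hd with h | h
      · rw [ih.2] at h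
        have he := eq_add_of_sub_eq h
        rw [he]
        push_cast; ring
      · rw [ih.2] at h
        exfalso
        have hψ : ψ ((3 * (t + 1 + 1) : ℕ) : ZMod (3 * k - 1))
            = ((3 * t : ℕ) : ZMod (3 * k - 1)) := by
          push_cast
          push_cast at h
          linear_combination -h
        have heq := hinj (hψ.trans ih.1.symm)
        have h6 : (6 : ZMod (3 * k - 1)) = 0 := by
          have h' : ((3 * (t + 1 + 1) : ℕ) : ZMod (3 * k - 1)) - ((3 * t : ℕ)) = 0 := by
            rw [heq, sub_self]
          push_cast at h'
          linear_combination h'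
        exact six_ne hk h6
  intro x
  obtain ⟨t, rfl⟩ := exists_three_mul hk x
  exact (key t).1

lemma classify (hk : 2 ≤ k) (σ : andrasfai k ≃g andrasfai k) :
    (∀ x, σ x = x + σ 0) ∨ (∀ x, σ x = σ 0 - x) := by
  have h30 : σ 3 - σ 0 = 3 ∨ σ 0 - σ 3 = 3 :=
    rel_pres hk σ 0 3 (Or.inl (by rw [sub_zero]))
  rcases h30 with h | h
  · left
    have hid := psi_id hk (fun x => σ x - σ 0)
      (fun a b hab => by
        have hab' : σ a - σ 0 = σ b - σ 0 := hab
        exact σ.injective (by linear_combination hab'))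
      (fun x y hxy => by
        have hp := rel_pres hk σ x y (Or.inl hxy)
        rcases hp with h' | h'
        · left; show σ y - σ 0 - (σ x - σ 0) = 3; linear_combination h'
        · right; show σ x - σ 0 - (σ y - σ 0) = 3; linear_combination h')
      (by simp) (by simpa using h)
    intro x
    have hx := hid x
    have hx' : σ x - σ 0 = x := hx
    linear_combination hx'
  · right
    have hid := psi_id hk (fun x => σ 0 - σ x)
      (fun a b hab => by
        have hab' : σ 0 - σ a = σ 0 - σ b := hab
        exact σ.injective (by linear_combination -hab'))
      (fun x y hxy => by
        have hp := rel_pres hk σ x y (Or.inl hxy)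
        rcases hp with h' | h'
        · right; show σ 0 - σ x - (σ 0 - σ y) = 3; linear_combination h'
        · left; show σ 0 - σ y - (σ 0 - σ x) = 3; linear_combination h')
      (by simp) (by simpa using h)
    intro x
    have hx : σ 0 - σ x = x := hid x
    linear_combination -hx

/-- Rotation automorphism `x ↦ x - i`. -/
def rot (k : ℕ) (i : ZMod (3 * k - 1)) : andrasfai k ≃g andrasfai k where
  toEquiv := Equiv.subRight i
  map_rel_iff' := by
    intro a b
    simp only [andrasfai, SimpleGraph.fromRel_adj, Equiv.subRight_apply]
    have e1 : b - i - (a - i) = b - a := by ring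
    have e2 : a - i - (b - i) = a - b := by ring
    rw [e1, e2]
    constructor
    · rintro ⟨hne, h⟩
      exact ⟨fun he => hne (by rw [he]), h⟩
    · rintro ⟨hne, h⟩
      exact ⟨fun he => hne (by linear_combination he), h⟩

/-- Reflection automorphism `x ↦ i - x`. -/
def ref (k : ℕ) (i : ZMod (3 * k - 1)) : andrasfai k ≃g andrasfai k where
  toEquiv := Equiv.subLeft i
  map_rel_iff' := by
    intro a b
    simp only [andrasfai, SimpleGraph.fromRel_adj, Equiv.subLeft_apply]
    have e1 : i - b - (i - a) = a - b := by ring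
    have e2 : i - a - (i - b) = b - a := by ring
    rw [e1, e2]
    constructor
    · rintro ⟨hne, h⟩
      exact ⟨fun he => hne (by rw [he]), h.symm⟩
    · rintro ⟨hne, h⟩
      exact ⟨fun he => hne (by linear_combination -he), h.symm⟩

@[simp] lemma rot_apply (i x : ZMod (3 * k - 1)) : rot k i x = x - i := rfl

@[simp] lemma ref_apply (i x : ZMod (3 * k - 1)) : ref k i x = i - x := rfl

/-- The homomorphism from the dihedral group to the automorphism group. -/
def phi (k : ℕ) : DihedralGroup (3 * k - 1) →* (andrasfai k ≃g andrasfai k) where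
  toFun := fun g => match g with
    | .r i => rot k i
    | .sr i => ref k i
  map_one' := by
    rw [show (1 : DihedralGroup (3 * k - 1)) = .r 0 from rfl]
    exact RelIso.ext fun x => sub_zero x
  map_mul' := by
    rintro (i | i) (j | j)
    · rw [DihedralGroup.r_mul_r]
      exact RelIso.ext fun x => show x - (i + j) = x - j - i by ring
    · rw [DihedralGroup.r_mul_sr]
      exact RelIso.ext fun x => show (j - i) - x = (j - x) - i by ring
    · rw [DihedralGroup.sr_mul_r]
      exact RelIso.ext fun x => show (i + j) - x = i - (x - j) by ring
    · rw [DihedralGroup.sr_mul_sr]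
      exact RelIso.ext fun x => show x - (j - i) = i - (j - x) by ring

lemma phi_bijective (hk : 2 ≤ k) : Function.Bijective (phi k) := by
  constructor
  · intro a b hab
    have hfun : ∀ x, phi k a x = phi k b x := fun x => by rw [hab]
    rcases a with i | i <;> rcases b with j | j
    · have h0 : (0 : ZMod (3 * k - 1)) - i = 0 - j := hfun 0
      have : i = j := by linear_combination -h0
      rw [this]
    · exfalso
      have h0 : (0 : ZMod (3 * k - 1)) - i = j - 0 := hfun 0
      have h1 : (1 : ZMod (3 * k - 1)) - i = j - 1 := hfun 1
      exact two_ne hk (by linear_combination h1 - h0)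
    · exfalso
      have h0 : i - (0 : ZMod (3 * k - 1)) = 0 - j := hfun 0
      have h1 : i - (1 : ZMod (3 * k - 1)) = 1 - j := hfun 1
      exact two_ne hk (by linear_combination h0 - h1)
    · have h0 : i - (0 : ZMod (3 * k - 1)) = j - 0 := hfun 0
      have : i = j := by linear_combination h0
      rw [this]
  · intro σ
    rcases classify hk σ with h | h
    · refine ⟨.r (-σ 0), RelIso.ext fun x => ?_⟩
      show rot k (-σ 0) x = σ x
      rw [rot_apply, h x]
      ring
    · refine ⟨.sr (σ 0), RelIso.ext fun x => ?_⟩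
      show ref k (σ 0) x = σ x
      rw [ref_apply, h x]

end AndrasfaiAux

theorem andrasfai_aut_dihedral (k : ℕ) (hk : 2 ≤ k) :
    Nonempty ((andrasfai k ≃g andrasfai k) ≃* DihedralGroup (3 * k - 1)) := by
  exact ⟨(MulEquiv.ofBijective (AndrasfaiAux.phi k) (AndrasfaiAux.phi_bijective hk)).symm⟩
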